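/- There is a countably infinite point set P ⊆ ℝ² in general position except for collinear triples (no 4 collinear) such that every pair of points of P that is visible with respect to P lies in a collinear triple of P. -/

import Mathlib

/-!
The points are chosen greedily, one at a time, while the pairs of indices are enumerated via
`Nat.unpair`. A step serves one pair `v, w` of earlier points: if it has no third point yet,
the new point is put on the open segment `vw`, otherwise on a segment whose line misses all
earlier points. A segment meets a line not containing it in at most one point, so the new
point can be chosen off every line through two earlier points, except the line `vw` which
then holds no earlier point besides `v` and `w`. Thus every new point is collinear with at
most one pair of earlier points, which rules out four collinear points, and every pair gets
its third point when it is served.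
-/

/-- `v` and `w` are visible with respect to `P`: they are distinct and no point of `P`
lies in the open segment between them. -/
def Visible (P : Set (ℝ × ℝ)) (v w : ℝ × ℝ) : Prop :=
  v ≠ w ∧ ∀ p ∈ P, p ∉ openSegment ℝ v w

/-- `P` contains no 4 collinear points. -/
def No4Collinear (P : Set (ℝ × ℝ)) : Prop :=
  ∀ a ∈ P, ∀ b ∈ P, ∀ c ∈ P, ∀ d ∈ P,
    a ≠ b → a ≠ c → a ≠ d → b ≠ c → b ≠ d → c ≠ d →
    ¬ Collinear ℝ ({a, b, c, d} : Set (ℝ × ℝ))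

open AffineMap

section AffineSpace

variable {k V P : Type*} [Field k] [AddCommGroup V] [Module k V] [AddTorsor V P]

theorem AffineSubspace.subsingleton_setOf_lineMap_mem {s : AffineSubspace k P} {v w : P}
    (h : ¬ (v ∈ s ∧ w ∈ s)) : {t : k | lineMap v w t ∈ s}.Subsingleton := by
  intro t₁ h₁ t₂ h₂
  by_contra hne
  have hmem : ∀ x : k, lineMap v w x ∈ s := by
    intro x
    have hx : lineMap t₁ t₂ ((x - t₁) / (t₂ - t₁)) = x := by
      rw [lineMap_apply_ring', div_mul_cancel₀ _ (sub_ne_zero.mpr (Ne.symm hne))]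
      ring
    rw [← hx, apply_lineMap]
    exact AffineMap.lineMap_mem _ h₁ h₂
  exact h ⟨by simpa using hmem 0, by simpa using hmem 1⟩

theorem mem_affineSpan_pair_of_mem_of_mem {a b v w : P} (hvw : v ≠ w)
    (hv : v ∈ line[k, a, b]) (hw : w ∈ line[k, a, b]) : a ∈ line[k, v, w] :=
  (collinear_insert_insert_of_mem_affineSpan_pair hv hw).mem_affineSpan_of_mem_of_ne
    (by simp) (by simp) (by simp) hvw

theorem eq_of_mem_affineSpan_pair_same {a v : P} (h : v ∈ line[k, a, a]) : v = a := by
  rwa [Set.pair_eq_singleton, AffineSubspace.mem_affineSpan_singleton] at h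

end AffineSpace

theorem exists_mem_openSegment_forall_mem_imp {𝕜 E : Type*} [Field 𝕜] [LinearOrder 𝕜]
    [IsStrictOrderedRing 𝕜] [AddCommGroup E] [Module 𝕜 E] {S : Set (AffineSubspace 𝕜 E)}
    (hS : S.Finite) (v w : E) :
    ∃ z ∈ openSegment 𝕜 v w, ∀ s ∈ S, z ∈ s → v ∈ s ∧ w ∈ s := by
  have hbad : (⋃ s ∈ {s ∈ S | ¬ (v ∈ s ∧ w ∈ s)}, {t : 𝕜 | lineMap v w t ∈ s}).Finite :=
    (hS.subset (Set.sep_subset _ _)).biUnion fun s hs =>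
      (AffineSubspace.subsingleton_setOf_lineMap_mem hs.2).finite
  obtain ⟨t, ht, htbad⟩ := ((Set.Ioo_infinite (zero_lt_one' 𝕜)).sdiff hbad).nonempty
  refine ⟨lineMap v w t, openSegment_eq_image_lineMap 𝕜 v w ▸ ⟨t, ht, rfl⟩, fun s hs hz => ?_⟩
  by_contra h
  exact htbad (Set.mem_biUnion (x := s) ⟨hs, h⟩ hz)

def HasThirdPoint (S : Set (ℝ × ℝ)) (v w : ℝ × ℝ) : Prop :=
  ∃ u ∈ S, u ≠ v ∧ u ≠ w ∧ Collinear ℝ ({v, w, u} : Set (ℝ × ℝ))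

theorem HasThirdPoint.mono {S T : Set (ℝ × ℝ)} {v w : ℝ × ℝ} (h : HasThirdPoint S v w)
    (hST : S ⊆ T) : HasThirdPoint T v w :=
  let ⟨u, hu, huv, huw, hcol⟩ := h
  ⟨u, hST hu, huv, huw, hcol⟩

theorem hasThirdPoint_of_mem_openSegment {S : Set (ℝ × ℝ)} {v w z : ℝ × ℝ} (hvw : v ≠ w)
    (hz : z ∈ openSegment ℝ v w) (hzS : z ∈ S) : HasThirdPoint S v w := by
  refine ⟨z, hzS, ?_, ?_, ?_⟩
  · rintro rfl
    exact hvw (left_mem_openSegment_iff.mp hz)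
  · rintro rfl
    exact hvw (right_mem_openSegment_iff.mp hz)
  · have hline : z ∈ line[ℝ, v, w] :=
      (mem_segment_iff_wbtw.mp (openSegment_subset_segment ℝ v w hz)).mem_affineSpan
    rw [Set.pair_comm, ← Set.insert_comm]
    exact collinear_insert_of_mem_affineSpan_pair hline

theorem fst_eq_of_mem_affineSpan_vertical {a : ℝ × ℝ} {c : ℝ}
    (h : a ∈ line[ℝ, ((c, 0) : ℝ × ℝ), (c, 1)]) : a.1 = c := by
  obtain ⟨r, rfl⟩ := mem_affineSpan_pair_iff_exists_lineMap_eq.mp h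
  simp

noncomputable section

def freshAbscissa (F : Finset (ℝ × ℝ)) : ℝ :=
  (Infinite.exists_notMem_finset (F.image Prod.fst)).choose

theorem freshAbscissa_ne_fst {F : Finset (ℝ × ℝ)} {a : ℝ × ℝ} (ha : a ∈ F) :
    a.1 ≠ freshAbscissa F := fun h =>
  (Infinite.exists_notMem_finset (F.image Prod.fst)).choose_spec
    (Finset.mem_image.mpr ⟨a, ha, h⟩)

open Classical in
/-- Where the next point goes: on the segment `vw` itself if this pair still lacks a third
point in `F`, otherwise on a vertical unit segment whose line misses `F`. -/
def targetSegment (F : Finset (ℝ × ℝ)) (v w : ℝ × ℝ) : (ℝ × ℝ) × (ℝ × ℝ) :=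
  if v ≠ w ∧ ¬ HasThirdPoint F v w then (v, w)
  else ((freshAbscissa F, 0), (freshAbscissa F, 1))

theorem targetSegment_of_not_hasThirdPoint {F : Finset (ℝ × ℝ)} {v w : ℝ × ℝ} (hvw : v ≠ w)
    (h : ¬ HasThirdPoint F v w) : targetSegment F v w = (v, w) :=
  if_pos ⟨hvw, h⟩

theorem targetSegment_fst_ne_snd (F : Finset (ℝ × ℝ)) (v w : ℝ × ℝ) :
    (targetSegment F v w).1 ≠ (targetSegment F v w).2 := by
  unfold targetSegment
  split_ifs with h
  · exact h.1
  · simp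

theorem eq_of_mem_affineSpan_targetSegment {F : Finset (ℝ × ℝ)} {v w a : ℝ × ℝ} (ha : a ∈ F)
    (hline : a ∈ line[ℝ, (targetSegment F v w).1, (targetSegment F v w).2]) :
    a = v ∨ a = w := by
  unfold targetSegment at hline
  split_ifs at hline with h
  · by_contra hne
    refine h.2 ⟨a, ha, (not_or.mp hne).1, (not_or.mp hne).2, ?_⟩
    rw [Set.pair_comm, ← Set.insert_comm]
    exact collinear_insert_of_mem_affineSpan_pair hline
  · exact absurd (fst_eq_of_mem_affineSpan_vertical hline) (freshAbscissa_ne_fst ha)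

def nextPoint (F : Finset (ℝ × ℝ)) (v w : ℝ × ℝ) : ℝ × ℝ :=
  (exists_mem_openSegment_forall_mem_imp
    ((F.finite_toSet.prod F.finite_toSet).image fun p => line[ℝ, p.1, p.2])
    (targetSegment F v w).1 (targetSegment F v w).2).choose

theorem nextPoint_spec (F : Finset (ℝ × ℝ)) (v w : ℝ × ℝ) :
    nextPoint F v w ∈ openSegment ℝ (targetSegment F v w).1 (targetSegment F v w).2 ∧
      ∀ a ∈ F, ∀ b ∈ F, nextPoint F v w ∈ line[ℝ, a, b] →
        (targetSegment F v w).1 ∈ line[ℝ, a, b] ∧ (targetSegment F v w).2 ∈ line[ℝ, a, b] := by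
  obtain ⟨hseg, hlines⟩ := (exists_mem_openSegment_forall_mem_imp
    ((F.finite_toSet.prod F.finite_toSet).image fun p => line[ℝ, p.1, p.2])
    (targetSegment F v w).1 (targetSegment F v w).2).choose_spec
  exact ⟨hseg, fun a ha b hb => hlines _ ⟨(a, b), ⟨ha, hb⟩, rfl⟩⟩

theorem nextPoint_mem_openSegment {F : Finset (ℝ × ℝ)} {v w : ℝ × ℝ} (hvw : v ≠ w)
    (h : ¬ HasThirdPoint F v w) : nextPoint F v w ∈ openSegment ℝ v w := by
  simpa [targetSegment_of_not_hasThirdPoint hvw h] using (nextPoint_spec F v w).1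

theorem nextPoint_notMem (F : Finset (ℝ × ℝ)) (v w : ℝ × ℝ) : nextPoint F v w ∉ F := by
  intro hF
  obtain ⟨h₁, h₂⟩ := (nextPoint_spec F v w).2 _ hF _ hF (left_mem_affineSpan_pair _ _ _)
  exact targetSegment_fst_ne_snd F v w
    ((eq_of_mem_affineSpan_pair_same h₁).trans (eq_of_mem_affineSpan_pair_same h₂).symm)

theorem eq_of_collinear_nextPoint {F : Finset (ℝ × ℝ)} {v w a b : ℝ × ℝ} (ha : a ∈ F)
    (hb : b ∈ F) (hab : a ≠ b) (hcol : Collinear ℝ ({a, b, nextPoint F v w} : Set (ℝ × ℝ))) :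
    a = v ∨ a = w := by
  have hline : nextPoint F v w ∈ line[ℝ, a, b] :=
    hcol.mem_affineSpan_of_mem_of_ne (by simp) (by simp) (by simp) hab
  obtain ⟨h₁, h₂⟩ := (nextPoint_spec F v w).2 a ha b hb hline
  exact eq_of_mem_affineSpan_targetSegment ha
    (mem_affineSpan_pair_of_mem_of_mem (targetSegment_fst_ne_snd F v w) h₁ h₂)

theorem No4Collinear.insert {P : Set (ℝ × ℝ)} {p : ℝ × ℝ} (hP : No4Collinear P)
    (hp : ∀ a ∈ P, ∀ b ∈ P, ∀ c ∈ P, a ≠ b → a ≠ c → b ≠ c →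
      ¬ Collinear ℝ ({p, a, b, c} : Set (ℝ × ℝ))) :
    No4Collinear (insert p P) := by
  intro a ha b hb c hc d hd hab hac had hbc hbd hcd hcol
  obtain rfl | ha := ha
  · exact hp b (hb.resolve_left hab.symm) c (hc.resolve_left hac.symm) d
      (hd.resolve_left had.symm) hbc hbd hcd hcol
  obtain rfl | hb := hb
  · rw [Set.insert_comm] at hcol
    exact hp a ha c (hc.resolve_left hbc.symm) d (hd.resolve_left hbd.symm) hac had hcd hcol
  obtain rfl | hc := hc
  · rw [Set.insert_comm b, Set.insert_comm a] at hcol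
    exact hp a ha b hb d (hd.resolve_left hcd.symm) hab had hbd hcol
  obtain rfl | hd := hd
  · rw [Set.pair_comm c, Set.insert_comm b, Set.insert_comm a] at hcol
    exact hp a ha b hb c hc hab hac hbc hcol
  exact hP a ha b hb c hc d hd hab hac had hbc hbd hcd hcol

namespace Greedy

/-- Step `n` serves the pair of earlier points with indices `Nat.unpair (n - 1)`, both `< n`.
At `n = 0` both lookups return the default, so the step adds a generic point. -/
def extend (l : List (ℝ × ℝ)) : ℝ × ℝ :=
  nextPoint l.toFinset (l.getD (Nat.unpair (l.length - 1)).1 0)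
    (l.getD (Nat.unpair (l.length - 1)).2 0)

def points : ℕ → List (ℝ × ℝ)
  | 0 => []
  | n + 1 => points n ++ [extend (points n)]

def point (n : ℕ) : ℝ × ℝ := extend (points n)

theorem points_succ (n : ℕ) : points (n + 1) = points n ++ [point n] := rfl

theorem length_points (n : ℕ) : (points n).length = n := by
  induction n with
  | zero => rfl
  | succ n ih => simp [points_succ, ih]

theorem mem_points {u : ℝ × ℝ} {n : ℕ} : u ∈ points n ↔ ∃ m < n, point m = u := by
  induction n with
  | zero => simp [points]
  | succ n ih =>
    simp only [points_succ, List.mem_append, List.mem_singleton, ih, Nat.lt_succ_iff_lt_or_eq,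
      or_and_right, exists_or, exists_eq_left]
    rw [eq_comm]

theorem getD_points {m n : ℕ} (h : m < n) : (points n).getD m 0 = point m := by
  induction n with
  | zero => omega
  | succ n ih =>
    rw [points_succ]
    rcases Nat.lt_succ_iff_lt_or_eq.mp h with h | rfl
    · rw [List.getD_append _ _ _ _ (by rwa [length_points]), ih h]
    · rw [List.getD_append_right _ _ _ _ (by rw [length_points])]
      simp [length_points]

theorem point_pair_add_one (i j : ℕ) :
    point (Nat.pair i j + 1) =
      nextPoint (points (Nat.pair i j + 1)).toFinset (point i) (point j) := by
  rw [point, extend, length_points, Nat.add_sub_cancel, Nat.unpair_pair,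
    getD_points (Nat.lt_succ_of_le (Nat.left_le_pair i j)),
    getD_points (Nat.lt_succ_of_le (Nat.right_le_pair i j))]

theorem point_notMem_points (n : ℕ) : point n ∉ points n := fun h =>
  nextPoint_notMem _ _ _ (List.mem_toFinset.mpr h)

theorem point_injective : Function.Injective point := by
  intro m n hmn
  by_contra hne
  rcases lt_or_gt_of_ne hne with h | h
  · exact point_notMem_points n (mem_points.mpr ⟨m, h, hmn⟩)
  · exact point_notMem_points m (mem_points.mpr ⟨n, h, hmn.symm⟩)

theorem exists_eq_or_eq_of_collinear_point (n : ℕ) :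
    ∃ v w : ℝ × ℝ, ∀ a ∈ points n, ∀ b ∈ points n, a ≠ b →
      Collinear ℝ ({a, b, point n} : Set (ℝ × ℝ)) → a = v ∨ a = w :=
  ⟨_, _, fun _ ha _ hb hab => eq_of_collinear_nextPoint (List.mem_toFinset.mpr ha)
    (List.mem_toFinset.mpr hb) hab⟩

theorem not_collinear_point {n : ℕ} {a b c : ℝ × ℝ} (ha : a ∈ points n) (hb : b ∈ points n)
    (hc : c ∈ points n) (hab : a ≠ b) (hac : a ≠ c) (hbc : b ≠ c) :
    ¬ Collinear ℝ ({point n, a, b, c} : Set (ℝ × ℝ)) := by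
  intro hcol
  obtain ⟨v, w, hvw⟩ := exists_eq_or_eq_of_collinear_point n
  have h₁ := hvw a ha b hb hab (hcol.subset (by simp [Set.insert_subset_iff]))
  have h₂ := hvw b hb a ha hab.symm (hcol.subset (by simp [Set.insert_subset_iff]))
  have h₃ := hvw c hc a ha hac.symm (hcol.subset (by simp [Set.insert_subset_iff]))
  grind

theorem no4Collinear_points (n : ℕ) : No4Collinear {u | u ∈ points n} := by
  induction n with
  | zero => simp [No4Collinear, points]
  | succ n ih =>
    have h : {u | u ∈ points (n + 1)} = insert (point n) {u | u ∈ points n} := by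
      ext; simp [points_succ, or_comm]
    rw [h]
    exact ih.insert fun a ha b hb c hc => not_collinear_point ha hb hc

theorem no4Collinear_range_point : No4Collinear (Set.range point) := by
  rintro _ ⟨i, rfl⟩ _ ⟨j, rfl⟩ _ ⟨k, rfl⟩ _ ⟨l, rfl⟩
  have hmem : ∀ m ≤ i + j + k + l, point m ∈ {u | u ∈ points (i + j + k + l + 1)} :=
    fun m hm => mem_points.mpr ⟨m, by omega, rfl⟩
  exact no4Collinear_points _ _ (hmem i (by omega)) _ (hmem j (by omega)) _ (hmem k (by omega))
    _ (hmem l (by omega))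

theorem hasThirdPoint_range_point {i j : ℕ} (hij : point i ≠ point j) :
    HasThirdPoint (Set.range point) (point i) (point j) := by
  by_cases h : HasThirdPoint (points (Nat.pair i j + 1)).toFinset (point i) (point j)
  · refine h.mono fun u hu => ?_
    obtain ⟨m, -, rfl⟩ := mem_points.mp (List.mem_toFinset.mp hu)
    exact ⟨m, rfl⟩
  · exact hasThirdPoint_of_mem_openSegment hij
      (point_pair_add_one i j ▸ nextPoint_mem_openSegment hij h) ⟨_, rfl⟩

end Greedy

end

theorem stmt15 :
    ∃ P : Set (ℝ × ℝ), P.Countable ∧ P.Infinite ∧ No4Collinear P ∧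
      ∀ v ∈ P, ∀ w ∈ P, v ≠ w → Visible P v w →
        ∃ u ∈ P, u ≠ v ∧ u ≠ w ∧ Collinear ℝ ({v, w, u} : Set (ℝ × ℝ)) := by
  refine ⟨Set.range Greedy.point, Set.countable_range _,
    Set.infinite_range_of_injective Greedy.point_injective, Greedy.no4Collinear_range_point, ?_⟩
  rintro _ ⟨i, rfl⟩ _ ⟨j, rfl⟩ hij -
  exact Greedy.hasThirdPoint_range_point hij
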